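/- Subgame equilibria with in-subgame best responses are full equilibria: let Λ' ⊆ Λ and I' ⊆ I be nonempty subsets, and let (x*, y*) be a Nash equilibrium of the restricted game (i.e. x*, y* are supported in Λ' and I' respectively, and U(x, y*) ≤ U(x*, y*) ≤ U(x*, y) for all mixed x supported in Λ' and all mixed y supported in I'). If some λ^BR ∈ Λ' attains the maximum over all λ ∈ Λ of ∑ ι, y* ι * u λ ι, and some ι^BR ∈ I' attains the minimum over all ι ∈ I of ∑ λ, x* λ * u λ ι, then (x*, y*) is a Nash equilibrium of the full game. -/
import Mathlib


open Finset

/-- A mixed strategy over a finite pure-strategy set: nonnegative weights summing to 1. -/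
def IsMixed {α : Type*} [Fintype α] (x : α → ℝ) : Prop :=
  (∀ a, 0 ≤ x a) ∧ ∑ a, x a = 1

/-- Expected payoff of the zero-sum game with payoff `u` under mixed strategies `x`, `y`. -/
def expPay {Λ I : Type*} [Fintype Λ] [Fintype I] (u : Λ → I → ℝ)
    (x : Λ → ℝ) (y : I → ℝ) : ℝ :=
  ∑ l, ∑ i, x l * y i * u l i

lemma pure_isMixed {α : Type*} [Fintype α] [DecidableEq α] (a : α) :
    IsMixed (fun b => if b = a then (1:ℝ) else 0) := by
  refine ⟨fun b => by positivity, ?_⟩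
  simp

/-- Subgame equilibria whose best responses already lie in the subgame are equilibria of the
full game. -/
theorem subgame_equilibrium_is_full {Λ I : Type*} [Fintype Λ] [Fintype I]
    [Nonempty Λ] [Nonempty I] (u : Λ → I → ℝ)
    (L' : Set Λ) (I' : Set I) (hL' : L'.Nonempty) (hI' : I'.Nonempty)
    (xs : Λ → ℝ) (ys : I → ℝ) (hx : IsMixed xs) (hy : IsMixed ys)
    (hxsupp : ∀ l ∉ L', xs l = 0) (hysupp : ∀ i ∉ I', ys i = 0)
    (hsubNE :
      (∀ x : Λ → ℝ, IsMixed x → (∀ l ∉ L', x l = 0) → expPay u x ys ≤ expPay u xs ys) ∧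
      (∀ y : I → ℝ, IsMixed y → (∀ i ∉ I', y i = 0) → expPay u xs ys ≤ expPay u xs y))
    (hBlueBR : ∃ lBR ∈ L', ∀ l : Λ, ∑ i, ys i * u l i ≤ ∑ i, ys i * u lBR i)
    (hRedBR : ∃ iBR ∈ I', ∀ i : I, ∑ l, xs l * u l iBR ≤ ∑ l, xs l * u l i) :
    (∀ x : Λ → ℝ, IsMixed x → expPay u x ys ≤ expPay u xs ys) ∧
    (∀ y : I → ℝ, IsMixed y → expPay u xs ys ≤ expPay u xs y) := by
  classical
  obtain ⟨lBR, hlBR, hlmax⟩ := hBlueBR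
  obtain ⟨iBR, hiBR, himin⟩ := hRedBR
  constructor
  · intro x hxm
    have h1 : expPay u x ys ≤ ∑ i, ys i * u lBR i := by
      unfold expPay
      have : ∀ l, ∑ i, x l * ys i * u l i = x l * ∑ i, ys i * u l i := by
        intro l; rw [Finset.mul_sum]; congr 1; ext i; ring
      simp_rw [this]
      calc ∑ l, x l * ∑ i, ys i * u l i ≤ ∑ l, x l * ∑ i, ys i * u lBR i := by
            apply Finset.sum_le_sum
            intro l _
            exact mul_le_mul_of_nonneg_left (hlmax l) (hxm.1 l)
        _ = ∑ i, ys i * u lBR i := by rw [← Finset.sum_mul, hxm.2, one_mul]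
    have h2 : expPay u (fun l => if l = lBR then (1:ℝ) else 0) ys
        = ∑ i, ys i * u lBR i := by
      unfold expPay
      rw [Finset.sum_eq_single lBR]
      · simp
      · intro b _ hb; simp [hb]
      · simp
    have h3 := hsubNE.1 (fun l => if l = lBR then (1:ℝ) else 0) (pure_isMixed lBR)
      (fun l hl => if_neg (fun h : l = lBR => hl (h ▸ hlBR)))
    rw [h2] at h3
    exact h1.trans h3
  · intro y hym
    have h1 : ∑ l, xs l * u l iBR ≤ expPay u xs y := by
      unfold expPay
      rw [Finset.sum_comm]
      have : ∀ i, ∑ l, xs l * y i * u l i = y i * ∑ l, xs l * u l i := by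
        intro i; rw [Finset.mul_sum]; congr 1; ext l; ring
      simp_rw [this]
      calc ∑ l, xs l * u l iBR = ∑ i, y i * ∑ l, xs l * u l iBR := by
            rw [← Finset.sum_mul, hym.2, one_mul]
        _ ≤ ∑ i, y i * ∑ l, xs l * u l i := by
            apply Finset.sum_le_sum
            intro i _
            exact mul_le_mul_of_nonneg_left (himin i) (hym.1 i)
    have h2 : expPay u xs (fun i => if i = iBR then (1:ℝ) else 0)
        = ∑ l, xs l * u l iBR := by
      unfold expPay
      rw [Finset.sum_comm, Finset.sum_eq_single iBR]
      · simp
      · intro b _ hb; simp [hb]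
      · simp
    have h3 := hsubNE.2 (fun i => if i = iBR then (1:ℝ) else 0) (pure_isMixed iBR)
      (fun i hi => if_neg (fun h : i = iBR => hi (h ▸ hiBR)))
    rw [h2] at h3
    exact h3.trans h1
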